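/- Let G be a finite group acting on [m] with an m-switch table s, and let σ := σ_0·σ_1···σ_{m-1} where σ_i = 1 + #{j > i : s(i,j) ≠ id}. Then σ ≤ m!, with equality if and only if the quotient G/G_{[m]} is isomorphic to the full symmetric group Sym(m). Moreover, σ = |G| if the action of G on [m] is faithful. -/

import Mathlib

/-!
The subgroups `G_{[i]}` form a descending chain from `G` to the kernel `G_{[m]}`, and
`G_{[i+1]}` is the stabilizer of `i` in `G_{[i]}`. The switch table identifies the
`G_{[i]}`-orbit of `i` as `{i} ∪ {j > i | s i j ≠ 1}`, so by orbit–stabilizer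
`σ_i = [G_{[i]} : G_{[i+1]}]`. Telescoping gives `σ = [G : G_{[m]}]`, the order of the image
of `G` in `Sym(m)`, and all three claims are statements about that subgroup of `Sym(m)`.
-/

open Classical

/-- The pointwise stabilizer `G_{[i]}` of `{0,...,i-1}` for a group `G` acting on `Fin m`. -/
def pstab (G : Type*) [Group G] (m : ℕ) [MulAction G (Fin m)] (i : ℕ) : Subgroup G where
  carrier := {g : G | ∀ k : Fin m, (k : ℕ) < i → g • k = k}
  one_mem' := fun k _ => one_smul G k
  mul_mem' := by
    intro a b ha hb k hk
    rw [mul_smul, hb k hk, ha k hk]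
  inv_mem' := by
    intro a ha k hk
    conv_lhs => rw [← ha k hk]
    exact inv_smul_smul a k

/-- An `m`-switch table for `G`: `s i j` is an element of `G_{[i]}` mapping `j` to `i`
if one exists, and the identity otherwise; by convention `s i i = 1`. -/
def IsSwitchTable (G : Type*) [Group G] (m : ℕ) [MulAction G (Fin m)]
    (s : Fin m → Fin m → G) : Prop :=
  (∀ i : Fin m, s i i = 1) ∧
  ∀ i j : Fin m,
    ((∃ g : G, g ∈ pstab G m (i : ℕ) ∧ g • j = i) →
      (s i j ∈ pstab G m (i : ℕ) ∧ s i j • j = i)) ∧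
    ((¬ ∃ g : G, g ∈ pstab G m (i : ℕ) ∧ g • j = i) → s i j = 1)

/-- `σ_i = 1 + #{j > i : s i j ≠ 1}`. -/
noncomputable def sigmaRow (G : Type*) [Group G] (m : ℕ) [MulAction G (Fin m)]
    (s : Fin m → Fin m → G) (i : Fin m) : ℕ :=
  1 + (Finset.univ.filter fun j : Fin m => i < j ∧ s i j ≠ 1).card

theorem Subgroup.prod_relIndex_succ_of_antitone {G : Type*} [Group G] {H : ℕ → Subgroup G}
    (hH : Antitone H) (n : ℕ) :
    ∏ i ∈ Finset.range n, (H (i + 1)).relIndex (H i) = (H n).relIndex (H 0) := by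
  induction n with
  | zero => simp
  | succ n ih =>
    rw [Finset.prod_range_succ, ih, mul_comm,
      Subgroup.relIndex_mul_relIndex _ _ _ (hH n.le_succ) (hH n.zero_le)]

section PointwiseStabilizer

variable {G : Type*} [Group G] {m : ℕ} [MulAction G (Fin m)]

theorem mem_pstab {i : ℕ} {g : G} : g ∈ pstab G m i ↔ ∀ k : Fin m, (k : ℕ) < i → g • k = k :=
  Iff.rfl

theorem pstab_antitone : Antitone (pstab G m) :=
  fun _ _ hij _ hg k hk => hg k (lt_of_lt_of_le hk hij)

theorem pstab_zero : pstab G m 0 = ⊤ := by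
  ext g
  simp [mem_pstab]

theorem pstab_eq_ker_toPermHom : pstab G m m = (MulAction.toPermHom G (Fin m)).ker := by
  ext g
  simp [mem_pstab, Equiv.Perm.ext_iff]

theorem subgroupOf_pstab_succ (i : Fin m) :
    (pstab G m (i + 1)).subgroupOf (pstab G m i) = MulAction.stabilizer (pstab G m i) i := by
  ext ⟨g, hg⟩
  simp only [Subgroup.mem_subgroupOf, MulAction.mem_stabilizer_iff, Subgroup.mk_smul, mem_pstab,
    Nat.lt_succ_iff_lt_or_eq, Fin.val_inj]
  refine ⟨fun h => h i (Or.inr rfl), fun h k hk => ?_⟩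
  rcases hk with hk | rfl
  exacts [hg k hk, h]

theorem relIndex_pstab_succ (i : Fin m) :
    (pstab G m (i + 1)).relIndex (pstab G m i) = (MulAction.orbit (pstab G m i) i).ncard := by
  rw [Subgroup.relIndex, subgroupOf_pstab_succ, MulAction.index_stabilizer]

theorem mem_orbit_pstab_iff_exists_smul_eq {i j : Fin m} :
    j ∈ MulAction.orbit (pstab G m i) i ↔ ∃ g ∈ pstab G m i, g • j = i := by
  rw [MulAction.mem_orbit_symm]
  simp [MulAction.mem_orbit_iff]

theorem le_of_mem_pstab_smul_eq {i j : Fin m} {g : G} (hg : g ∈ pstab G m i) (hgj : g • j = i) :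
    i ≤ j := by
  by_contra! hji
  have := hg j hji
  rw [hgj] at this
  exact hji.ne' this

end PointwiseStabilizer

namespace IsSwitchTable

variable {G : Type*} [Group G] {m : ℕ} [MulAction G (Fin m)] {s : Fin m → Fin m → G}

theorem ne_one_iff (hs : IsSwitchTable G m s) {i j : Fin m} (hij : i ≠ j) :
    s i j ≠ 1 ↔ ∃ g ∈ pstab G m i, g • j = i := by
  refine ⟨fun hne => by_contra fun hex => hne ((hs.2 i j).2 hex), fun hex hone => hij ?_⟩
  have := ((hs.2 i j).1 hex).2
  rwa [hone, one_smul, eq_comm] at this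

theorem mem_orbit_pstab_iff (hs : IsSwitchTable G m s) (i j : Fin m) :
    j ∈ MulAction.orbit (pstab G m i) i ↔ j = i ∨ (i < j ∧ s i j ≠ 1) := by
  rcases eq_or_ne i j with rfl | hij
  · simp [MulAction.mem_orbit_self]
  rw [mem_orbit_pstab_iff_exists_smul_eq, hs.ne_one_iff hij]
  constructor
  · rintro ⟨g, hg, hgj⟩
    exact Or.inr ⟨lt_of_le_of_ne (le_of_mem_pstab_smul_eq hg hgj) hij, g, hg, hgj⟩
  · rintro (rfl | ⟨-, hex⟩)
    exacts [absurd rfl hij, hex]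

theorem ncard_orbit_pstab (hs : IsSwitchTable G m s) (i : Fin m) :
    (MulAction.orbit (pstab G m i) i).ncard = sigmaRow G m s i := by
  have horbit : MulAction.orbit (pstab G m i) i =
      ↑(insert i (Finset.univ.filter fun j : Fin m => i < j ∧ s i j ≠ 1)) := by
    ext j
    simp [hs.mem_orbit_pstab_iff]
  rw [horbit, Set.ncard_coe_finset, Finset.card_insert_of_notMem (by simp), sigmaRow, add_comm]

theorem prod_sigmaRow (hs : IsSwitchTable G m s) :
    ∏ i : Fin m, sigmaRow G m s i = Nat.card (MulAction.toPermHom G (Fin m)).range := by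
  calc ∏ i : Fin m, sigmaRow G m s i
      = ∏ i ∈ Finset.range m, (pstab G m (i + 1)).relIndex (pstab G m i) := by
        rw [← Fin.prod_univ_eq_prod_range]
        simp only [relIndex_pstab_succ, hs.ncard_orbit_pstab]
    _ = (pstab G m m).index := by
        rw [Subgroup.prod_relIndex_succ_of_antitone pstab_antitone, pstab_zero,
          Subgroup.relIndex_top_right]
    _ = Nat.card (MulAction.toPermHom G (Fin m)).range := by
        rw [pstab_eq_ker_toPermHom, Subgroup.index_ker]

end IsSwitchTable

/-- `σ = σ_0 σ_1 ⋯ σ_{m-1}` satisfies `σ ≤ m!`, with equality iff the image of `G` in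
`Sym(m)` is everything (i.e. `G/G_{[m]} ≅ Sym(m)`); moreover `σ = |G|` if the action is
faithful. -/
theorem sigma_le_factorial (G : Type*) [Group G] [Fintype G] (m : ℕ)
    [MulAction G (Fin m)] (s : Fin m → Fin m → G) (hs : IsSwitchTable G m s) :
    (∏ i : Fin m, sigmaRow G m s i) ≤ Nat.factorial m ∧
    ((∏ i : Fin m, sigmaRow G m s i) = Nat.factorial m ↔
      Function.Surjective (MulAction.toPermHom G (Fin m))) ∧
    (Function.Injective (MulAction.toPermHom G (Fin m)) →
      (∏ i : Fin m, sigmaRow G m s i) = Fintype.card G) := by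
  have hperm : Nat.card (Equiv.Perm (Fin m)) = m.factorial := by simp [Fintype.card_perm]
  rw [hs.prod_sigmaRow, ← hperm, ← MonoidHom.range_eq_top, ← Subgroup.card_eq_iff_eq_top]
  refine ⟨Subgroup.card_le_card_group _, Iff.rfl, fun hinj => ?_⟩
  rw [← Subgroup.index_ker, (MonoidHom.ker_eq_bot_iff _).mpr hinj, Subgroup.index_bot,
    Nat.card_eq_fintype_card]
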